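/- Let p : [n]^k → Γ_k be a monotone partial-information function and s any slice. Let J_s(p) be the coordinatewise maximum (join) of the set Post_s(p) of postfixed points of p on s, and M_s(p) the coordinatewise minimum (meet) of Pre_s(p). Then p(J_s(p))_i ∈ {0, ≥} for all free coordinates i ∈ F(s), and p(M_s(p))_i ∈ {0, ≤} for all i ∈ F(s). -/

import Mathlib

/-- Symbols of the partial-information alphabet: −1, 0, 1, ≤, ≥, ◇. -/
inductive PISym : Type where
  | neg | zero | pos | sle | sge | dia
deriving DecidableEq

/-- Points of the `k`-dimensional grid, as integer vectors. -/
abbrev Pt (k : ℕ) := Fin k → ℤ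

/-- `x ∈ [n]^k`. -/
def inGrid (n k : ℕ) (x : Pt k) : Prop := ∀ i, 1 ≤ x i ∧ x i ≤ (n : ℤ)

/-- The `i`-th standard unit vector. -/
def eVec (k : ℕ) (i : Fin k) : Pt k := fun j => if j = i then 1 else 0

/-- A slice of `[n]^k`: `none` marks a free coordinate. -/
abbrev Slice (k : ℕ) := Fin k → Option ℤ

def fullSlice (k : ℕ) : Slice k := fun _ => none

def validSlice (n : ℕ) {k : ℕ} (s : Slice k) : Prop :=
  ∀ i v, s i = some v → 1 ≤ v ∧ v ≤ (n : ℤ)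

def inSlice {k : ℕ} (s : Slice k) (x : Pt k) : Prop :=
  ∀ i v, s i = some v → x i = v

/-- Monotone partial-information function (Definition 2.4). -/
def MonoPI (n k : ℕ) (p1 : Pt k → Fin k → PISym) (p2 : Pt k → PISym) : Prop :=
  (∀ x, inGrid n k x → p2 x = PISym.pos ∨ p2 x = PISym.neg ∨ p2 x = PISym.dia) ∧
  (∀ x y, inGrid n k x → inGrid n k y → ∀ i : Fin k,
    (p1 x i = PISym.pos → x ≤ y → y i = x i →
      p1 y i = PISym.pos ∧
        (y i < (n : ℤ) → p1 (y + eVec k i) i ∈ ({PISym.pos, PISym.zero, PISym.sge} : Set PISym))) ∧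
    (p1 x i = PISym.neg → y ≤ x → y i = x i →
      p1 y i = PISym.neg ∧
        (1 < y i → p1 (y - eVec k i) i ∈ ({PISym.neg, PISym.zero, PISym.sle} : Set PISym))) ∧
    (p1 x i = PISym.zero → y ≤ x → y i = x i →
      p1 y i ∈ ({PISym.zero, PISym.neg, PISym.sle} : Set PISym)) ∧
    (p1 x i = PISym.zero → x ≤ y → y i = x i →
      p1 y i ∈ ({PISym.zero, PISym.pos, PISym.sge} : Set PISym)) ∧
    (p1 x i = PISym.sle → y ≤ x → y i = x i → p1 y i ∈ ({PISym.neg, PISym.sle} : Set PISym)) ∧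
    (p1 x i = PISym.sge → x ≤ y → y i = x i → p1 y i ∈ ({PISym.pos, PISym.sge} : Set PISym))) ∧
  (∀ x, inGrid n k x → ∀ i : Fin k,
    (x i = 1 → p1 x i ∈ ({PISym.zero, PISym.pos, PISym.sge} : Set PISym)) ∧
    (x i = (n : ℤ) → p1 x i ∈ ({PISym.zero, PISym.neg, PISym.sle} : Set PISym))) ∧
  (∀ x y, inGrid n k x → inGrid n k y → x ≤ y →
    (p2 x = PISym.pos → p2 y = PISym.pos) ∧ (p2 y = PISym.neg → p2 x = PISym.neg))

/-- Postfixed points of a PI function on a slice. -/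
def Post (n k : ℕ) (p1 : Pt k → Fin k → PISym) (s : Slice k) : Set (Pt k) :=
  {x | inGrid n k x ∧ inSlice s x ∧
       ∀ i, s i = none → p1 x i ∈ ({PISym.pos, PISym.zero, PISym.sge} : Set PISym)}

/-- Prefixed points of a PI function on a slice. -/
def Pre (n k : ℕ) (p1 : Pt k → Fin k → PISym) (s : Slice k) : Set (Pt k) :=
  {x | inGrid n k x ∧ inSlice s x ∧
       ∀ i, s i = none → p1 x i ∈ ({PISym.neg, PISym.zero, PISym.sle} : Set PISym)}

/-- Safe PI functions (Definition 2.8). -/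
def SafePI (n k : ℕ) (p1 : Pt k → Fin k → PISym) (p2 : Pt k → PISym) : Prop :=
  MonoPI n k p1 p2 ∧
  ∀ s : Slice k, validSlice n s →
    (∀ J, IsGreatest (Post n k p1 s) J →
      ∀ x, inGrid n k x → inSlice s x → x ≤ J → x ≠ J →
        (∀ i, s i = none → x i < J i →
          p1 x i ∈ ({PISym.neg, PISym.zero, PISym.pos} : Set PISym)) ∧
        (∃ i, s i = none ∧ x i < J i ∧ p1 x i = PISym.pos)) ∧
    (∀ M, IsLeast (Pre n k p1 s) M →
      ∀ x, inGrid n k x → inSlice s x → M ≤ x → x ≠ M →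
        (∀ i, s i = none → M i < x i →
          p1 x i ∈ ({PISym.neg, PISym.zero, PISym.pos} : Set PISym)) ∧
        (∃ i, s i = none ∧ M i < x i ∧ p1 x i = PISym.neg))

/-- `x^{−i}` for `i ∈ [k]`. -/
def dminus {k : ℕ} (i : Fin k) (x : Pt k) : Pt k :=
  fun j => if j ≠ i ∧ 1 < x j then x j - 1 else x j

/-- `x^{−(k+1)}`. -/
def dminusAll {k : ℕ} (x : Pt k) : Pt k :=
  fun j => if 1 < x j then x j - 1 else x j

/-- `x^{+i}` for `i ∈ [k]`. -/
def dplus (n : ℕ) {k : ℕ} (i : Fin k) (x : Pt k) : Pt k :=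
  fun j => if j ≠ i ∧ x j < (n : ℤ) then x j + 1 else x j

/-- `x^{+(k+1)}`. -/
def dplusAll (n : ℕ) {k : ℕ} (x : Pt k) : Pt k :=
  fun j => if x j < (n : ℤ) then x j + 1 else x j

def IntPlus {k : ℕ} (p1 : Pt k → Fin k → PISym) (i : Fin k) : Set (Pt k) :=
  {x | p1 (dminus i x) i = PISym.pos}

def IntPlusLast {k : ℕ} (p1 : Pt k → Fin k → PISym) (p2 : Pt k → PISym) : Set (Pt k) :=
  {x | p2 (dminusAll x) = PISym.pos ∨
    ∃ i, p1 (dminus i x) i ∈ ({PISym.pos, PISym.zero, PISym.sge} : Set PISym) ∧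
         p2 (dminus i x) = PISym.pos}

def IntMinus (n : ℕ) {k : ℕ} (p1 : Pt k → Fin k → PISym) (i : Fin k) : Set (Pt k) :=
  {x | p1 (dplus n i x) i = PISym.neg}

def IntMinusLast (n : ℕ) {k : ℕ} (p1 : Pt k → Fin k → PISym) (p2 : Pt k → PISym) : Set (Pt k) :=
  {x | p2 (dplusAll n x) = PISym.neg ∨
    ∃ i, p1 (dplus n i x) i ∈ ({PISym.neg, PISym.zero, PISym.sle} : Set PISym) ∧
         p2 (dplus n i x) = PISym.neg}

/-- `Cand⁺(p)` relative to `J = J(p)` and `M = M(p)`. -/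
def CandPlus (n k : ℕ) (p1 : Pt k → Fin k → PISym) (p2 : Pt k → PISym) (J M : Pt k) :
    Set (Pt k) :=
  {x | inGrid n k x ∧ J ≤ x ∧ x ≤ M ∧
    (∀ i, p1 x i ≠ PISym.neg ∧ x ∉ IntPlus p1 i) ∧
    p2 x ≠ PISym.neg ∧ x ∉ IntPlusLast p1 p2}

/-- `Cand⁻(p)` relative to `J = J(p)` and `M = M(p)`. -/
def CandMinus (n k : ℕ) (p1 : Pt k → Fin k → PISym) (p2 : Pt k → PISym) (J M : Pt k) :
    Set (Pt k) :=
  {x | inGrid n k x ∧ J ≤ x ∧ x ≤ M ∧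
    (∀ i, p1 x i ≠ PISym.pos ∧ x ∉ IntMinus n p1 i) ∧
    p2 x ≠ PISym.pos ∧ x ∉ IntMinusLast n p1 p2}

/-- The information partial order on symbols: `symDom a b` means `a ⇒ b`. -/
def symDom (a b : PISym) : Prop :=
  b = PISym.dia ∨ a = b ∨ (a = PISym.pos ∧ b = PISym.sge) ∨
  (a = PISym.zero ∧ (b = PISym.sge ∨ b = PISym.sle)) ∨ (a = PISym.neg ∧ b = PISym.sle)

/-- `p ⇒ p'`: `p` dominates (is more informative than) `p'`. -/
def PIdom (n k : ℕ) (p1 : Pt k → Fin k → PISym) (p2 : Pt k → PISym)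
    (q1 : Pt k → Fin k → PISym) (q2 : Pt k → PISym) : Prop :=
  ∀ x, inGrid n k x → (∀ i, symDom (p1 x i) (q1 x i)) ∧ symDom (p2 x) (q2 x)

/-- A sign value `a ∈ {−1,0,1}` is consistent with a symbol `b`. -/
def consS (a : ℤ) (b : PISym) : Prop :=
  match b with
  | PISym.dia => True
  | PISym.pos => a = 1
  | PISym.neg => a = -1
  | PISym.zero => a = 0
  | PISym.sge => a = 0 ∨ a = 1
  | PISym.sle => a = -1 ∨ a = 0

/-- A sign function `f` is consistent with the PI function `p` (i.e., `f ⇒ p`). -/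
def SignCons (n k : ℕ) (f1 : Pt k → Pt k) (f2 : Pt k → ℤ)
    (p1 : Pt k → Fin k → PISym) (p2 : Pt k → PISym) : Prop :=
  ∀ x, inGrid n k x → (∀ i, consS (f1 x i) (p1 x i)) ∧ consS (f2 x) (p2 x)

/-- Monotone sign function: `x ↦ (x + f1 x, f2 x)` is well defined and monotone. -/
def MonoSign (n k : ℕ) (f1 : Pt k → Pt k) (f2 : Pt k → ℤ) : Prop :=
  (∀ x, inGrid n k x →
    (∀ i, f1 x i = -1 ∨ f1 x i = 0 ∨ f1 x i = 1) ∧ (f2 x = 1 ∨ f2 x = -1)) ∧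
  (∀ x, inGrid n k x → inGrid n k (x + f1 x)) ∧
  (∀ a b, inGrid n k a → inGrid n k b → a ≤ b → a + f1 a ≤ b + f1 b ∧ f2 a ≤ f2 b)

def PostF (n k : ℕ) (f1 : Pt k → Pt k) (s : Slice k) : Set (Pt k) :=
  {x | inGrid n k x ∧ inSlice s x ∧ ∀ i, s i = none → 0 ≤ f1 x i}

def PreF (n k : ℕ) (f1 : Pt k → Pt k) (s : Slice k) : Set (Pt k) :=
  {x | inGrid n k x ∧ inSlice s x ∧ ∀ i, s i = none → f1 x i ≤ 0}

/-- Safe sign functions (conditions (1') and (2') of Definition 2.8). -/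
def SafeSign (n k : ℕ) (f1 : Pt k → Pt k) (f2 : Pt k → ℤ) : Prop :=
  MonoSign n k f1 f2 ∧
  ∀ s : Slice k, validSlice n s →
    (∀ J, IsGreatest (PostF n k f1 s) J →
      ∀ x, inGrid n k x → inSlice s x → x ≤ J → x ≠ J →
        ∃ i, s i = none ∧ x i < J i ∧ f1 x i = 1) ∧
    (∀ M, IsLeast (PreF n k f1 s) M →
      ∀ x, inGrid n k x → inSlice s x → M ≤ x → x ≠ M →
        ∃ i, s i = none ∧ M i < x i ∧ f1 x i = -1)

/-- The revealed solutions of a PI function. -/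
def SolPI (n k : ℕ) (p1 : Pt k → Fin k → PISym) (p2 : Pt k → PISym) : Set (Pt k) :=
  {x | inGrid n k x ∧
    (((∀ i, p1 x i ∈ ({PISym.pos, PISym.zero, PISym.sge} : Set PISym)) ∧ p2 x = PISym.pos) ∨
     ((∀ i, p1 x i ∈ ({PISym.neg, PISym.zero, PISym.sle} : Set PISym)) ∧ p2 x = PISym.neg))}

/-- `x ≪_s y` : `x ⪯ y` with strict inequality in every free coordinate of `s`. -/
def lls {k : ℕ} (s : Slice k) (x y : Pt k) : Prop :=
  x ≤ y ∧ ∀ i, s i = none → x i < y i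

/-- `s` is a slice witnessing `ŝ(x,p) ≠ nil`: `x ∈ L_s` and `x ≪_s J_s(p)`. -/
def HasSlice (n k : ℕ) (p1 : Pt k → Fin k → PISym) (x : Pt k) (s : Slice k) : Prop :=
  validSlice n s ∧ inSlice s x ∧ ∃ J, IsGreatest (Post n k p1 s) J ∧ lls s x J

/-- `s = ŝ(x,p)`: `s` is the maximal slice with `x ∈ L_s` and `x ≪_s J_s(p)`. -/
def MaxSlice (n k : ℕ) (p1 : Pt k → Fin k → PISym) (x : Pt k) (s : Slice k) : Prop :=
  HasSlice n k p1 x s ∧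
  ∀ s', HasSlice n k p1 x s' → ∀ i, s' i = none → s i = none

/-! If a free coordinate `i` of `J = J_s(p)` read `1`, then `J + eᵢ` would again be postfixed:
the monotonicity axiom for `1` gives `p(J + eᵢ)ᵢ ∈ {1, 0, ≥}`, and every other free coordinate
keeps its symbol in `{1, 0, ≥}` because it is unchanged while the point moves up. This contradicts
the maximality of `J`. Dually for `M_s(p)` and `−1`. -/

section

variable {n k : ℕ} {p1 : Pt k → Fin k → PISym} {p2 : Pt k → PISym}

theorem eVec_self (i : Fin k) : eVec k i i = 1 := if_pos rfl

theorem eVec_of_ne {i j : Fin k} (h : j ≠ i) : eVec k i j = 0 := if_neg h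

theorem le_add_eVec (x : Pt k) (i : Fin k) : x ≤ x + eVec k i := fun j => by
  by_cases h : j = i
  · subst h; simp [eVec_self]
  · simp [eVec_of_ne h]

theorem sub_eVec_le (x : Pt k) (i : Fin k) : x - eVec k i ≤ x := fun j => by
  by_cases h : j = i
  · subst h; simp [eVec_self]
  · simp [eVec_of_ne h]

theorem inSlice_add_eVec {s : Slice k} {x : Pt k} {i : Fin k} (hx : inSlice s x)
    (hi : s i = none) (c : ℤ) : inSlice s (x + c • eVec k i) := fun j v hv => by
  have hj : j ≠ i := by rintro rfl; simp [hi] at hv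
  simpa [eVec_of_ne hj] using hx j v hv

theorem inGrid_add_eVec {x : Pt k} {i : Fin k} (hx : inGrid n k x) (hi : x i < n) :
    inGrid n k (x + eVec k i) := fun j => by
  by_cases h : j = i
  · subst h; simp only [Pi.add_apply, eVec_self]; constructor <;> linarith [hx j]
  · simpa [eVec_of_ne h] using hx j

theorem inGrid_sub_eVec {x : Pt k} {i : Fin k} (hx : inGrid n k x) (hi : 1 < x i) :
    inGrid n k (x - eVec k i) := fun j => by
  by_cases h : j = i
  · subst h; simp only [Pi.sub_apply, eVec_self]; constructor <;> linarith [hx j]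
  · simpa [eVec_of_ne h] using hx j

namespace MonoPI

theorem lt_of_pos (hp : MonoPI n k p1 p2) {x : Pt k} (hx : inGrid n k x) {i : Fin k}
    (hpos : p1 x i = PISym.pos) : x i < n := by
  refine lt_of_le_of_ne (hx i).2 fun h => ?_
  have := (hp.2.2.1 x hx i).2 h
  simp [hpos] at this

theorem one_lt_of_neg (hp : MonoPI n k p1 p2) {x : Pt k} (hx : inGrid n k x) {i : Fin k}
    (hneg : p1 x i = PISym.neg) : 1 < x i := by
  refine lt_of_le_of_ne (hx i).1 fun h => ?_
  have := (hp.2.2.1 x hx i).1 h.symm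
  simp [hneg] at this

theorem mem_post_syms_of_le (hp : MonoPI n k p1 p2) {x y : Pt k} (hx : inGrid n k x)
    (hy : inGrid n k y) (hxy : x ≤ y) {j : Fin k} (hj : y j = x j)
    (h : p1 x j ∈ ({PISym.pos, PISym.zero, PISym.sge} : Set PISym)) :
    p1 y j ∈ ({PISym.pos, PISym.zero, PISym.sge} : Set PISym) := by
  obtain ⟨hpos, -, -, hzero, -, hsge⟩ := hp.2.1 x y hx hy j
  simp only [Set.mem_insert_iff, Set.mem_singleton_iff] at h hzero hsge ⊢
  rcases h with h | h | h
  · exact Or.inl (hpos h hxy hj).1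
  · rcases hzero h hxy hj with h' | h' | h' <;> simp [h']
  · rcases hsge h hxy hj with h' | h' <;> simp [h']

theorem mem_pre_syms_of_le (hp : MonoPI n k p1 p2) {x y : Pt k} (hx : inGrid n k x)
    (hy : inGrid n k y) (hyx : y ≤ x) {j : Fin k} (hj : y j = x j)
    (h : p1 x j ∈ ({PISym.neg, PISym.zero, PISym.sle} : Set PISym)) :
    p1 y j ∈ ({PISym.neg, PISym.zero, PISym.sle} : Set PISym) := by
  obtain ⟨-, hneg, hzero, -, hsle, -⟩ := hp.2.1 x y hx hy j
  simp only [Set.mem_insert_iff, Set.mem_singleton_iff] at h hzero hsle ⊢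
  rcases h with h | h | h
  · exact Or.inl (hneg h hyx hj).1
  · rcases hzero h hyx hj with h' | h' | h' <;> simp [h']
  · rcases hsle h hyx hj with h' | h' <;> simp [h']

theorem add_eVec_mem_post (hp : MonoPI n k p1 p2) {s : Slice k} {x : Pt k}
    (hx : x ∈ Post n k p1 s) {i : Fin k} (hi : s i = none) (hpos : p1 x i = PISym.pos) :
    x + eVec k i ∈ Post n k p1 s := by
  obtain ⟨hxg, hxs, hxp⟩ := hx
  have hlt := hp.lt_of_pos hxg hpos
  have hyg := inGrid_add_eVec hxg hlt
  refine ⟨hyg, by simpa using inSlice_add_eVec hxs hi 1, fun j hj => ?_⟩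
  by_cases hji : j = i
  · subst hji
    exact ((hp.2.1 x x hxg hxg j).1 hpos le_rfl rfl).2 hlt
  · exact hp.mem_post_syms_of_le hxg hyg (le_add_eVec x i) (by simp [eVec_of_ne hji])
      (hxp j hj)

theorem sub_eVec_mem_pre (hp : MonoPI n k p1 p2) {s : Slice k} {x : Pt k}
    (hx : x ∈ Pre n k p1 s) {i : Fin k} (hi : s i = none) (hneg : p1 x i = PISym.neg) :
    x - eVec k i ∈ Pre n k p1 s := by
  obtain ⟨hxg, hxs, hxp⟩ := hx
  have hlt := hp.one_lt_of_neg hxg hneg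
  have hyg := inGrid_sub_eVec hxg hlt
  refine ⟨hyg, by simpa [sub_eq_add_neg] using inSlice_add_eVec hxs hi (-1), fun j hj => ?_⟩
  by_cases hji : j = i
  · subst hji
    exact ((hp.2.1 x x hxg hxg j).2.1 hneg le_rfl rfl).2 hlt
  · exact hp.mem_pre_syms_of_le hxg hyg (sub_eVec_le x i) (by simp [eVec_of_ne hji])
      (hxp j hj)

end MonoPI

end

theorem stmt3_general (n k : ℕ) (p1 : Pt k → Fin k → PISym) (p2 : Pt k → PISym)
    (hp : MonoPI n k p1 p2) (s : Slice k) :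
    (∀ J, IsGreatest (Post n k p1 s) J →
      ∀ i, s i = none → p1 J i = PISym.zero ∨ p1 J i = PISym.sge) ∧
    (∀ M, IsLeast (Pre n k p1 s) M →
      ∀ i, s i = none → p1 M i = PISym.zero ∨ p1 M i = PISym.sle) := by
  constructor
  · rintro J ⟨hJ, hJmax⟩ i hi
    rcases hJ.2.2 i hi with hpos | hJi | hJi
    · have := hJmax (hp.add_eVec_mem_post hJ hi hpos) i
      simp [eVec_self] at this
    · exact Or.inl hJi
    · exact Or.inr hJi
  · rintro M ⟨hM, hMmin⟩ i hi
    rcases hM.2.2 i hi with hneg | hMi | hMi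
    · have := hMmin (hp.sub_eVec_mem_pre hM hi hneg) i
      simp [eVec_self] at this
    · exact Or.inl hMi
    · exact Or.inr hMi

/-- Lemma 2.6: at the join of `Post_s(p)` the free coordinates read `{0, ≥}`,
and at the meet of `Pre_s(p)` they read `{0, ≤}`. -/
theorem stmt3 (n k : ℕ) (p1 : Pt k → Fin k → PISym) (p2 : Pt k → PISym)
    (hp : MonoPI n k p1 p2) (s : Slice k) (hs : validSlice n s) :
    (∀ J, IsGreatest (Post n k p1 s) J →
      ∀ i, s i = none → p1 J i = PISym.zero ∨ p1 J i = PISym.sge) ∧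
    (∀ M, IsLeast (Pre n k p1 s) M →
      ∀ i, s i = none → p1 M i = PISym.zero ∨ p1 M i = PISym.sle) :=
  stmt3_general n k p1 p2 hp s
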